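/- Let Δ₂, Δ₃ ∈ ℝ with Δ₃ ≠ 0 and Δ₁ := Δ₂² − 4Δ₃ < 0, and let ε ∈ ℝ. Define f(s) := (1 + Δ₂ s² + Δ₃ s⁴)^{1/4} · exp( (Δ₂/(2√(−Δ₁))) · ( arctan((Δ₂ + 2Δ₃ s²)/√(−Δ₁)) − arctan(Δ₂/√(−Δ₁)) ) ). Then for all s ∈ ℝ one has 1 + Δ₂ s² + Δ₃ s⁴ > 0, and the function u(s) := 1 + 2ε ∫₀ˢ f(σ) dσ satisfies equation (E₀), i.e. (1 + Δ₂ s² + Δ₃ s⁴) u''(s) = s(Δ₂ + Δ₃ s²) u'(s) for all s ∈ ℝ, together with u(0) = 1 and u'(0) = 2ε. -/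

import Mathlib

/-!
Write `P(s) = 1 + Δ₂ s² + Δ₃ s⁴` and `q = √(4Δ₃ - Δ₂²)`. Everything rests on the identity
`4Δ₃ P = (Δ₂ + 2Δ₃ s²)² + q²`: it shows `P > 0` (note `Δ₃ > 0`), and it turns the derivative of
`arctan ((Δ₂ + 2Δ₃ s²)/q)` into `4Δ₃ s q / (4Δ₃ P) = s q / P`. Hence `f = exp φ` with
`φ' = s(Δ₂ + 2Δ₃ s²)/(2P) + Δ₂ s/(2P) = s(Δ₂ + Δ₃ s²)/P`, i.e. `P f' = s(Δ₂ + Δ₃ s²) f`,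
while `u' = 2ε f` by the fundamental theorem of calculus.
-/

/-- The integrand `f` in the case `Δ₃ ≠ 0`, `Δ₁ := Δ₂² − 4Δ₃ < 0`:
`f(s) = (1 + Δ₂ s² + Δ₃ s⁴)^{1/4} ·
  exp( (Δ₂/(2√(−Δ₁))) (arctan((Δ₂ + 2Δ₃ s²)/√(−Δ₁)) − arctan(Δ₂/√(−Δ₁))) )`. -/
noncomputable def f9 (Δ₂ Δ₃ : ℝ) (s : ℝ) : ℝ :=
  (1 + Δ₂ * s ^ 2 + Δ₃ * s ^ 4) ^ ((1 : ℝ) / 4) *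
    Real.exp ((Δ₂ / (2 * Real.sqrt (-(Δ₂ ^ 2 - 4 * Δ₃)))) *
      (Real.arctan ((Δ₂ + 2 * Δ₃ * s ^ 2) / Real.sqrt (-(Δ₂ ^ 2 - 4 * Δ₃))) -
        Real.arctan (Δ₂ / Real.sqrt (-(Δ₂ ^ 2 - 4 * Δ₃)))))

/-- `u(s) = 1 + 2ε ∫₀ˢ f(σ) dσ`. -/
noncomputable def u9 (Δ₂ Δ₃ ε : ℝ) (s : ℝ) : ℝ :=
  1 + 2 * ε * ∫ σ in (0:ℝ)..s, f9 Δ₂ Δ₃ σ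

open Real

section

variable {Δ₂ Δ₃ : ℝ}

lemma quartic_pos (hΔ₁ : Δ₂ ^ 2 - 4 * Δ₃ < 0) (s : ℝ) : 0 < 1 + Δ₂ * s ^ 2 + Δ₃ * s ^ 4 := by
  have hΔ₃ : 0 < Δ₃ := by nlinarith [sq_nonneg Δ₂]
  have h : 0 < 4 * Δ₃ * (1 + Δ₂ * s ^ 2 + Δ₃ * s ^ 4) := by
    nlinarith [sq_nonneg (Δ₂ + 2 * Δ₃ * s ^ 2)]
  exact pos_of_mul_pos_right h (by positivity)

lemma hasDerivAt_quartic (s : ℝ) :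
    HasDerivAt (fun s => 1 + Δ₂ * s ^ 2 + Δ₃ * s ^ 4) (2 * Δ₂ * s + 4 * Δ₃ * s ^ 3) s := by
  refine ((((hasDerivAt_pow 2 s).const_mul Δ₂).const_add 1).add
    ((hasDerivAt_pow 4 s).const_mul Δ₃)).congr_deriv ?_
  push_cast
  ring

lemma hasDerivAt_log_quartic (hΔ₁ : Δ₂ ^ 2 - 4 * Δ₃ < 0) (s : ℝ) :
    HasDerivAt (fun s => log (1 + Δ₂ * s ^ 2 + Δ₃ * s ^ 4) / 4)
      (s * (Δ₂ + 2 * Δ₃ * s ^ 2) / (2 * (1 + Δ₂ * s ^ 2 + Δ₃ * s ^ 4))) s := by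
  have hP := (quartic_pos hΔ₁ s).ne'
  refine (((hasDerivAt_quartic s).log hP).div_const 4).congr_deriv ?_
  field_simp
  ring

lemma hasDerivAt_arctan_phase (hΔ₁ : Δ₂ ^ 2 - 4 * Δ₃ < 0) (s : ℝ) :
    HasDerivAt (fun s => Δ₂ / (2 * √(-(Δ₂ ^ 2 - 4 * Δ₃))) *
        (arctan ((Δ₂ + 2 * Δ₃ * s ^ 2) / √(-(Δ₂ ^ 2 - 4 * Δ₃))) -
          arctan (Δ₂ / √(-(Δ₂ ^ 2 - 4 * Δ₃)))))
      (Δ₂ * s / (2 * (1 + Δ₂ * s ^ 2 + Δ₃ * s ^ 4))) s := by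
  set q := √(-(Δ₂ ^ 2 - 4 * Δ₃))
  have hq : 0 < q := sqrt_pos.2 (by linarith)
  have hq2 : q ^ 2 = -(Δ₂ ^ 2 - 4 * Δ₃) := sq_sqrt (by linarith)
  have hP := (quartic_pos hΔ₁ s).ne'
  have hg : HasDerivAt (fun s => (Δ₂ + 2 * Δ₃ * s ^ 2) / q) (4 * Δ₃ * s / q) s := by
    refine ((((hasDerivAt_pow 2 s).const_mul (2 * Δ₃)).const_add Δ₂).div_const q).congr_deriv ?_
    push_cast
    ring
  have hΔ₃ : Δ₃ ≠ 0 := by rintro rfl; nlinarith [sq_nonneg Δ₂]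
  have h_one_add_sq : 1 + ((Δ₂ + 2 * Δ₃ * s ^ 2) / q) ^ 2
      = 4 * Δ₃ * (1 + Δ₂ * s ^ 2 + Δ₃ * s ^ 4) / q ^ 2 := by
    field_simp
    rw [hq2]
    ring
  refine ((hg.arctan.sub_const (arctan (Δ₂ / q))).const_mul (Δ₂ / (2 * q))).congr_deriv ?_
  rw [h_one_add_sq]
  field_simp

lemma f9_eq_exp (hΔ₁ : Δ₂ ^ 2 - 4 * Δ₃ < 0) (s : ℝ) :
    f9 Δ₂ Δ₃ s = exp (log (1 + Δ₂ * s ^ 2 + Δ₃ * s ^ 4) / 4 +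
      Δ₂ / (2 * √(-(Δ₂ ^ 2 - 4 * Δ₃))) *
        (arctan ((Δ₂ + 2 * Δ₃ * s ^ 2) / √(-(Δ₂ ^ 2 - 4 * Δ₃))) -
          arctan (Δ₂ / √(-(Δ₂ ^ 2 - 4 * Δ₃))))) := by
  rw [f9, rpow_def_of_pos (quartic_pos hΔ₁ s), exp_add]
  ring_nf

lemma hasDerivAt_f9 (hΔ₁ : Δ₂ ^ 2 - 4 * Δ₃ < 0) (s : ℝ) :
    HasDerivAt (f9 Δ₂ Δ₃)
      (s * (Δ₂ + Δ₃ * s ^ 2) / (1 + Δ₂ * s ^ 2 + Δ₃ * s ^ 4) * f9 Δ₂ Δ₃ s) s := by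
  have hP := (quartic_pos hΔ₁ s).ne'
  have h := ((hasDerivAt_log_quartic hΔ₁ s).add (hasDerivAt_arctan_phase hΔ₁ s)).exp
  rw [Pi.add_apply, ← f9_eq_exp hΔ₁] at h
  refine (h.congr_of_eventuallyEq (.of_forall (f9_eq_exp hΔ₁))).congr_deriv ?_
  field_simp
  ring

lemma continuous_f9 (hΔ₁ : Δ₂ ^ 2 - 4 * Δ₃ < 0) : Continuous (f9 Δ₂ Δ₃) :=
  continuous_iff_continuousAt.2 fun s => (hasDerivAt_f9 hΔ₁ s).continuousAt

lemma deriv_u9 (hΔ₁ : Δ₂ ^ 2 - 4 * Δ₃ < 0) (ε : ℝ) :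
    deriv (u9 Δ₂ Δ₃ ε) = fun s => 2 * ε * f9 Δ₂ Δ₃ s :=
  funext fun s => ((((continuous_f9 hΔ₁).integral_hasStrictDerivAt 0 s).hasDerivAt.const_mul
    (2 * ε)).const_add 1).deriv

lemma f9_zero : f9 Δ₂ Δ₃ 0 = 1 := by
  simp [f9]

end

theorem stmt9_general (Δ₂ Δ₃ ε : ℝ) (hΔ₁ : Δ₂ ^ 2 - 4 * Δ₃ < 0) :
    (∀ s : ℝ, 0 < 1 + Δ₂ * s ^ 2 + Δ₃ * s ^ 4) ∧
    (∀ s : ℝ,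
      (1 + Δ₂ * s ^ 2 + Δ₃ * s ^ 4) * deriv (deriv (u9 Δ₂ Δ₃ ε)) s
        = s * (Δ₂ + Δ₃ * s ^ 2) * deriv (u9 Δ₂ Δ₃ ε) s) ∧
    u9 Δ₂ Δ₃ ε 0 = 1 ∧
    deriv (u9 Δ₂ Δ₃ ε) 0 = 2 * ε := by
  refine ⟨quartic_pos hΔ₁, fun s => ?_, by simp [u9], by simp [deriv_u9 hΔ₁, f9_zero]⟩
  have hP := (quartic_pos hΔ₁ s).ne'
  rw [deriv_u9 hΔ₁, ((hasDerivAt_f9 hΔ₁ s).const_mul (2 * ε)).deriv]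
  linear_combination (2 * ε * f9 Δ₂ Δ₃ s) * mul_div_cancel₀ (s * (Δ₂ + Δ₃ * s ^ 2)) hP

theorem stmt9 (Δ₂ Δ₃ ε : ℝ) (hΔ₃ : Δ₃ ≠ 0) (hΔ₁ : Δ₂ ^ 2 - 4 * Δ₃ < 0) :
    (∀ s : ℝ, 0 < 1 + Δ₂ * s ^ 2 + Δ₃ * s ^ 4) ∧
    (∀ s : ℝ,
      (1 + Δ₂ * s ^ 2 + Δ₃ * s ^ 4) * deriv (deriv (u9 Δ₂ Δ₃ ε)) s
        = s * (Δ₂ + Δ₃ * s ^ 2) * deriv (u9 Δ₂ Δ₃ ε) s) ∧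
    u9 Δ₂ Δ₃ ε 0 = 1 ∧
    deriv (u9 Δ₂ Δ₃ ε) 0 = 2 * ε :=
  stmt9_general Δ₂ Δ₃ ε hΔ₁
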